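/- For any vertex v of G satisfying dist(x_i, y_i) = dist(x_i, v) + dist(v, y_i) for i = 1, 2, the following polynomial identity holds: H_v(x1, y1, x2, y2) = F(x2, v) · F_disj(x1, v, v, y2) · F(v, y1). -/

import Mathlib

open scoped BigOperators

namespace DSP

variable {V : Type*} [Fintype V] [DecidableEq V]

/-- A path: a nonempty list of distinct vertices in which each consecutive
pair is joined by a directed edge. -/
def IsPath (E : V → V → Prop) (p : List V) : Prop :=
  p ≠ [] ∧ p.Nodup ∧ p.Chain' E

/-- A path from `x` to `y`. -/
def IsPathFrom (E : V → V → Prop) (p : List V) (x y : V) : Prop :=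
  IsPath E p ∧ p.head? = some x ∧ p.getLast? = some y

/-- The (ordered) list of edges of a path. -/
def pathEdges (p : List V) : List (V × V) := p.zip p.tail

/-- The weight of a path: the sum of its edge weights. -/
def pathWeight (ℓ : V → V → ℝ) (p : List V) : ℝ :=
  ((pathEdges p).map fun e => ℓ e.1 e.2).sum

/-- `dist x y` : the minimum weight of a path from `x` to `y`
(`⊤` if there is no such path). -/
noncomputable def dist (E : V → V → Prop) (ℓ : V → V → ℝ) (x y : V) : EReal :=
  sInf {w : EReal | ∃ p : List V, IsPathFrom E p x y ∧ (pathWeight ℓ p : EReal) = w}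

/-- A shortest path from `x` to `y` : a path from `x` to `y` whose weight
equals `dist x y`.  `Π(x, y)` is the set of all such paths. -/
def IsShortestPath (E : V → V → Prop) (ℓ : V → V → ℝ) (p : List V) (x y : V) : Prop :=
  IsPathFrom E p x y ∧ (pathWeight ℓ p : EReal) = dist E ℓ x y

/-- A directed cycle: a closed walk with at least one edge whose internal
vertices are pairwise distinct. -/
def IsCycle (E : V → V → Prop) (p : List V) : Prop :=
  2 ≤ p.length ∧ p.Chain' E ∧ p.head? = p.getLast? ∧ p.tail.Nodup

/-- `G` contains no directed cycle of negative or zero total weight. -/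
def NoNonposCycle (E : V → V → Prop) (ℓ : V → V → ℝ) : Prop :=
  ∀ p : List V, IsCycle E p → 0 < pathWeight ℓ p

/-- `G` is a DAG: it contains no directed cycle. -/
def Acyclic (E : V → V → Prop) : Prop :=
  ∀ p : List V, ¬ IsCycle E p

/-- `x` precedes `y` on the path `p` (`x = y` allowed). -/
def Precedes (p : List V) (x y : V) : Prop :=
  x ∈ p ∧ y ∈ p ∧ p.idxOf x ≤ p.idxOf y

/-- `subpath p x y` : the subpath `p[x, y]` of `p` from `x` to `y`
(for `x` preceding `y` on `p`). -/
def subpath (p : List V) (x y : V) : List V :=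
  (p.take (p.idxOf y + 1)).drop (p.idxOf x)

/-- Concatenation `p · q` of two paths (the last vertex of `p` coinciding
with the first vertex of `q`). -/
def pathConcat (p q : List V) : List V := p ++ q.tail

/-- A vertex is internal to a path if it lies on it and is not an endpoint. -/
def Internal (p : List V) (v : V) : Prop :=
  v ∈ p ∧ p.head? ≠ some v ∧ p.getLast? ≠ some v

/-- Paths `p1` from `x1` to `y1` and `p2` from `x2` to `y2` are internally
vertex-disjoint: they share no vertices except possibly those in
`{x1, y1} ∩ {x2, y2}`. -/
def InternallyDisjoint (p1 : List V) (x1 y1 : V) (p2 : List V) (x2 y2 : V) : Prop :=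
  ∀ u, u ∈ p1 → u ∈ p2 → u ∈ ({x1, y1} ∩ {x2, y2} : Set V)

/-- `(a, b)` is a twin-crossing pair for paths `p1`, `p2`. -/
def TwinCrossingPair (p1 p2 : List V) (a b : V) : Prop :=
  a ≠ b ∧ Precedes p1 a b ∧ Precedes p2 a b ∧ subpath p1 a b ≠ subpath p2 a b

/-- The swap operation `φ_{a,b}(P1, P2)`. -/
def swap (p1 : List V) (x1 y1 : V) (p2 : List V) (x2 y2 : V) (a b : V) :
    List V × List V :=
  (pathConcat (pathConcat (subpath p1 x1 a) (subpath p2 a b)) (subpath p1 b y1),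
   pathConcat (pathConcat (subpath p2 x2 a) (subpath p1 a b)) (subpath p2 b y2))

/-- The graph with vertex `u` deleted. -/
def deleteVertex (E : V → V → Prop) (u : V) : V → V → Prop :=
  fun a b => E a b ∧ a ≠ u ∧ b ≠ u

/-- `u` is distance-critical for `(x, y)` : deleting `u` strictly increases
the distance from `x` to `y`. -/
def DistCritical (E : V → V → Prop) (ℓ : V → V → ℝ) (x y u : V) : Prop :=
  dist E ℓ x y < dist (deleteVertex E u) ℓ x y

/-- `Δ(x, y)` : the distance-critical vertices for `(x, y)` together with the
endpoints `x`, `y`. -/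
def Delta (E : V → V → Prop) (ℓ : V → V → ℝ) (x y : V) : Set V :=
  {u | DistCritical E ℓ x y u} ∪ {x, y}

/-- `δ(x, y) = |Δ(x, y)|`. -/
noncomputable def deltaCard (E : V → V → Prop) (ℓ : V → V → ℝ) (x y : V) : ℕ :=
  (Delta E ℓ x y).ncard

/-- `(a, b)` is a concordant pair for paths `p1` (from `x1` to `y1`) and
`p2` (from `x2` to `y2`). -/
def ConcordantPair (p1 : List V) (x1 y1 : V) (p2 : List V) (x2 y2 : V) (a b : V) : Prop :=
  a ∉ ({x1, y1} ∩ {x2, y2} : Set V) ∧ b ∉ ({x1, y1} ∩ {x2, y2} : Set V) ∧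
  Precedes p1 a b ∧ Precedes p2 a b ∧
  InternallyDisjoint (subpath p1 x1 a) x1 a (subpath p2 x2 a) x2 a ∧
  InternallyDisjoint (subpath p1 b y1) b y1 (subpath p2 b y2) b y2

/-- `𝒞(P1, P2)` : the set of concordant pairs for `(P1, P2)`. -/
def concordantSet (p1 : List V) (x1 y1 : V) (p2 : List V) (x2 y2 : V) : Set (V × V) :=
  {c | ConcordantPair p1 x1 y1 p2 x2 y2 c.1 c.2}

/-- The interaction complexity `γ(P1, P2) = Σ_{(v,w) ∈ 𝒞(P1,P2)} δ(v, w)`. -/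
noncomputable def gamma (E : V → V → Prop) (ℓ : V → V → ℝ)
    (p1 : List V) (x1 y1 : V) (p2 : List V) (x2 y2 : V) : ℕ :=
  ∑ᶠ c ∈ concordantSet p1 x1 y1 p2 x2 y2, deltaCard E ℓ c.1 c.2

/-- `E(x, y)` : the set of edges lying on at least one shortest path
from `x` to `y`. -/
def shortestEdges (E : V → V → Prop) (ℓ : V → V → ℝ) (x y : V) : Set (V × V) :=
  {e | ∃ p : List V, IsShortestPath E ℓ p x y ∧ e ∈ pathEdges p}

section Poly

variable (F : Type*) [Field F] [CharP F 2]

/-- The monomial `f(P) = ∏_{e ∈ E(P)} z_e` of a path. -/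
noncomputable def pathMon (p : List V) : MvPolynomial (V × V) F :=
  ((pathEdges p).map fun e => MvPolynomial.X e).prod

/-- The enumerating polynomial of a collection of paths. -/
noncomputable def enumPoly (S : Set (List V)) : MvPolynomial (V × V) F :=
  ∑ᶠ p ∈ S, pathMon F p

/-- The enumerating polynomial of a collection of pairs of paths. -/
noncomputable def enumPoly2 (S : Set (List V × List V)) : MvPolynomial (V × V) F :=
  ∑ᶠ q ∈ S, pathMon F q.1 * pathMon F q.2

variable (E : V → V → Prop) (ℓ : V → V → ℝ)

/-- `F(x, y)` : the enumerating polynomial of `Π(x, y)`. -/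
noncomputable def Fpoly (x y : V) : MvPolynomial (V × V) F :=
  enumPoly F {p : List V | IsShortestPath E ℓ p x y}

end Poly

variable (E : V → V → Prop) (ℓ : V → V → ℝ)

/-- The collection of internally vertex-disjoint pairs
`(P1, P2) ∈ Π(x1, y1) × Π(x2, y2)`. -/
def disjPairs (x1 y1 x2 y2 : V) : Set (List V × List V) :=
  {q | IsShortestPath E ℓ q.1 x1 y1 ∧ IsShortestPath E ℓ q.2 x2 y2 ∧
       InternallyDisjoint q.1 x1 y1 q.2 x2 y2}

/-- Pairs `(P1, P2) ∈ Π(x1, y1) × Π(x2, y2)` such that `v ∈ V(P1) ∩ V(P2)`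
and the prefix `P1[x1, v]` and the suffix `P2[v, y2]` are internally
vertex-disjoint (defining `H_v`). -/
def HvPairs (v x1 y1 x2 y2 : V) : Set (List V × List V) :=
  {q | IsShortestPath E ℓ q.1 x1 y1 ∧ IsShortestPath E ℓ q.2 x2 y2 ∧
       v ∈ q.1 ∧ v ∈ q.2 ∧
       InternallyDisjoint (subpath q.1 x1 v) x1 v (subpath q.2 v y2) v y2}

/-- Pairs `(P1, P2) ∈ Π(x1, y1) × Π(x2, y2)` such that
`(a, v) ∈ E(P1) ∩ E(P2)` and the prefix `P1[x1, a]` and the suffix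
`P2[v, y2]` are internally vertex-disjoint (defining `H_{av}`). -/
def HavPairs (a v x1 y1 x2 y2 : V) : Set (List V × List V) :=
  {q | IsShortestPath E ℓ q.1 x1 y1 ∧ IsShortestPath E ℓ q.2 x2 y2 ∧
       (a, v) ∈ pathEdges q.1 ∧ (a, v) ∈ pathEdges q.2 ∧
       InternallyDisjoint (subpath q.1 x1 a) x1 a (subpath q.2 v y2) v y2}

/-- Pairs `(P1, P2) ∈ Π(x1, y1) × Π(x2, y2)` such that `v ∈ V(P1) ∩ V(P2)`
and the prefix `P1[x1, v]` is internally vertex-disjoint from both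
`P2[x2, v]` and `P2[v, y2]` (defining `D_v`). -/
def DvPairs (v x1 y1 x2 y2 : V) : Set (List V × List V) :=
  {q | IsShortestPath E ℓ q.1 x1 y1 ∧ IsShortestPath E ℓ q.2 x2 y2 ∧
       v ∈ q.1 ∧ v ∈ q.2 ∧
       InternallyDisjoint (subpath q.1 x1 v) x1 v (subpath q.2 x2 v) x2 v ∧
       InternallyDisjoint (subpath q.1 x1 v) x1 v (subpath q.2 v y2) v y2}

/-- Pairs `(P1, P2) ∈ Π(x1, y1) × Π(x2, y2)` with interaction complexity
`γ(P1, P2) ≤ k` (defining `F_{disj,k}`). -/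
def disjkPairs (k : ℤ) (x1 y1 x2 y2 : V) : Set (List V × List V) :=
  {q | IsShortestPath E ℓ q.1 x1 y1 ∧ IsShortestPath E ℓ q.2 x2 y2 ∧
       (gamma E ℓ q.1 x1 y1 q.2 x2 y2 : ℤ) ≤ k}

/-- Pairs `(P1, P2) ∈ Π(x1, y1) × Π(x2, y2)` with `γ(P1, P2) ≤ k` such that
`(v, w) ∈ 𝒞(P1, P2)` and `(v, w)` is the concordant pair appearing first
along `P1` (defining `D_{v,w,k}`). -/
def DvwkPairs (k : ℤ) (v w x1 y1 x2 y2 : V) : Set (List V × List V) :=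
  {q | IsShortestPath E ℓ q.1 x1 y1 ∧ IsShortestPath E ℓ q.2 x2 y2 ∧
       (gamma E ℓ q.1 x1 y1 q.2 x2 y2 : ℤ) ≤ k ∧
       (v, w) ∈ concordantSet q.1 x1 y1 q.2 x2 y2 ∧
       ∀ c ∈ concordantSet q.1 x1 y1 q.2 x2 y2, q.1.idxOf v ≤ q.1.idxOf c.1}

/-- Pairs `(P1, P2) ∈ Π(x1, y1) × Π(x2, y2)` such that `v` and `w` lie on
both paths with `v` preceding `w` on both, the subpaths `P1[x1, v]` and
`P2[w, y2]` are internally vertex-disjoint, and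
`γ(P1[v, y1], P2[x2, w]) ≤ k` (defining `H_{v,w,k}`). -/
def HvwkPairs (k : ℤ) (v w x1 y1 x2 y2 : V) : Set (List V × List V) :=
  {q | IsShortestPath E ℓ q.1 x1 y1 ∧ IsShortestPath E ℓ q.2 x2 y2 ∧
       Precedes q.1 v w ∧ Precedes q.2 v w ∧
       InternallyDisjoint (subpath q.1 x1 v) x1 v (subpath q.2 w y2) w y2 ∧
       (gamma E ℓ (subpath q.1 v y1) v y1 (subpath q.2 x2 w) x2 w : ℤ) ≤ k}

/-- As `HvwkPairs`, additionally requiring the edge `(a, v)` on both paths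
(disjointness imposed on `P1[x1, a]` and `P2[w, y2]`), defining `H_{av,w,k}`. -/
def HavwkPairs (k : ℤ) (a v w x1 y1 x2 y2 : V) : Set (List V × List V) :=
  {q | IsShortestPath E ℓ q.1 x1 y1 ∧ IsShortestPath E ℓ q.2 x2 y2 ∧
       Precedes q.1 v w ∧ Precedes q.2 v w ∧
       (a, v) ∈ pathEdges q.1 ∧ (a, v) ∈ pathEdges q.2 ∧
       InternallyDisjoint (subpath q.1 x1 a) x1 a (subpath q.2 w y2) w y2 ∧
       (gamma E ℓ (subpath q.1 v y1) v y1 (subpath q.2 x2 w) x2 w : ℤ) ≤ k}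

/-- As `HvwkPairs`, additionally requiring the edge `(w, b)` on both paths
(disjointness imposed on `P1[x1, v]` and `P2[b, y2]`), defining `H_{v,wb,k}`. -/
def HvwbkPairs (k : ℤ) (v w b x1 y1 x2 y2 : V) : Set (List V × List V) :=
  {q | IsShortestPath E ℓ q.1 x1 y1 ∧ IsShortestPath E ℓ q.2 x2 y2 ∧
       Precedes q.1 v w ∧ Precedes q.2 v w ∧
       (w, b) ∈ pathEdges q.1 ∧ (w, b) ∈ pathEdges q.2 ∧
       InternallyDisjoint (subpath q.1 x1 v) x1 v (subpath q.2 b y2) b y2 ∧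
       (gamma E ℓ (subpath q.1 v y1) v y1 (subpath q.2 x2 w) x2 w : ℤ) ≤ k}

/-- As `HvwkPairs`, additionally requiring both edges `(a, v)` and `(w, b)`
on both paths (disjointness imposed on `P1[x1, a]` and `P2[b, y2]`),
defining `H_{av,wb,k}`. -/
def HavwbkPairs (k : ℤ) (a v w b x1 y1 x2 y2 : V) : Set (List V × List V) :=
  {q | IsShortestPath E ℓ q.1 x1 y1 ∧ IsShortestPath E ℓ q.2 x2 y2 ∧
       Precedes q.1 v w ∧ Precedes q.2 v w ∧
       (a, v) ∈ pathEdges q.1 ∧ (a, v) ∈ pathEdges q.2 ∧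
       (w, b) ∈ pathEdges q.1 ∧ (w, b) ∈ pathEdges q.2 ∧
       InternallyDisjoint (subpath q.1 x1 a) x1 a (subpath q.2 b y2) b y2 ∧
       (gamma E ℓ (subpath q.1 v y1) v y1 (subpath q.2 x2 w) x2 w : ℤ) ≤ k}

end DSP

/-!
Splitting at `v` is a bijection from the pairs counted by `H_v` onto the triples
`(P2[x2, v], (P1[x1, v], P2[v, y2]), P1[v, y1])`, and `f` is multiplicative along it.
By the distance condition, the two pieces of a shortest path through `v` are shortest.
Conversely, gluing shortest paths `x → v` and `v → y` yields a walk of weight `dist x y`,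
and this walk is a path: a repeated vertex would cut out a closed walk, whose innermost
repetition is a cycle of positive weight, leaving a walk lighter than `dist x y`.
-/

lemma List.exists_eq_append_cons_append_cons_of_not_nodup {α : Type*} {c : List α}
    (h : ¬ c.Nodup) :
    ∃ s u m t, c = s ++ u :: (m ++ u :: t) ∧ (m ++ [u]).Nodup := by
  induction c with
  | nil => simp at h
  | cons a c ih =>
    by_cases hc : c.Nodup
    · obtain ⟨m, t, rfl⟩ := List.append_of_mem (by simpa [hc] using h : a ∈ c)
      exact ⟨[], a, m, t, rfl, hc.sublist (by simp)⟩
    · obtain ⟨s, u, m, t, rfl, hm⟩ := ih hc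
      exact ⟨a :: s, u, m, t, rfl, hm⟩

lemma EReal.eq_coe_of_le_of_add_eq {a b : EReal} {A B : ℝ} (ha : a ≤ A) (hb : b ≤ B)
    (h : a + b = A + B) : a = A ∧ b = B := by
  induction a using EReal.rec <;> induction b using EReal.rec <;>
    simp_all [← EReal.coe_add, EReal.coe_le_coe_iff]
  constructor <;> linarith

theorem finsum_mem_prod_mul {α β R : Type*} [CommSemiring R] {s : Set α} {t : Set β}
    (hs : s.Finite) (ht : t.Finite) (f : α → R) (g : β → R) :
    ∑ᶠ p ∈ s ×ˢ t, f p.1 * g p.2 = (∑ᶠ a ∈ s, f a) * ∑ᶠ b ∈ t, g b := by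
  rw [finsum_mem_eq_finite_toFinset_sum _ (hs.prod ht), finsum_mem_eq_finite_toFinset_sum _ hs,
    finsum_mem_eq_finite_toFinset_sum _ ht, ← Set.Finite.toFinset_prod, Finset.sum_mul_sum,
    Finset.sum_product]

namespace DSP

variable {V : Type*} {E : V → V → Prop} {ℓ : V → V → ℝ}

lemma pathEdges_append_cons (s : List V) (u : V) (t : List V) :
    pathEdges (s ++ u :: t) = pathEdges (s ++ [u]) ++ pathEdges (u :: t) := by
  induction s with
  | nil => simp [pathEdges]
  | cons a s ih => cases s <;> simp_all [pathEdges]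

lemma pathWeight_append_cons (ℓ : V → V → ℝ) (s : List V) (u : V) (t : List V) :
    pathWeight ℓ (s ++ u :: t) = pathWeight ℓ (s ++ [u]) + pathWeight ℓ (u :: t) := by
  rw [pathWeight, pathEdges_append_cons, List.map_append, List.sum_append]; rfl

lemma pathMon_append_cons (F : Type*) [Field F] (s : List V) (u : V) (t : List V) :
    pathMon F (s ++ u :: t) = pathMon F (s ++ [u]) * pathMon F (u :: t) := by
  rw [pathMon, pathEdges_append_cons, List.map_append, List.prod_append]; rfl

def IsWalkFrom (E : V → V → Prop) (c : List V) (x y : V) : Prop :=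
  c.IsChain E ∧ c.head? = some x ∧ c.getLast? = some y

lemma isPathFrom_iff {p : List V} {x y : V} :
    IsPathFrom E p x y ↔ p.Nodup ∧ IsWalkFrom E p x y := by
  constructor
  · rintro ⟨⟨-, hnd, hch⟩, hx, hy⟩
    exact ⟨hnd, hch, hx, hy⟩
  · rintro ⟨hnd, hch, hx, hy⟩
    exact ⟨⟨by rintro rfl; simp at hx, hnd, hch⟩, hx, hy⟩

lemma IsWalkFrom.exists_shorter (hG : NoNonposCycle E ℓ) {c : List V} {x y : V}
    (hc : IsWalkFrom E c x y) (hnd : ¬ c.Nodup) :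
    ∃ c', IsWalkFrom E c' x y ∧ c'.length < c.length ∧ pathWeight ℓ c' < pathWeight ℓ c := by
  obtain ⟨s, u, m, t, rfl, hm⟩ := List.exists_eq_append_cons_append_cons_of_not_nodup hnd
  obtain ⟨hch, hx, hy⟩ := hc
  obtain ⟨hs, hmt⟩ := List.isChain_split.1 hch
  obtain ⟨hm', ht⟩ := List.isChain_split (l₁ := u :: m).1 hmt
  have hcycle : 0 < pathWeight ℓ (u :: (m ++ [u])) :=
    hG _ ⟨by simp, hm', (List.getLast?_append_cons (u :: m) u []).symm, hm⟩
  have hw := pathWeight_append_cons ℓ (u :: m) u t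
  have hlast := List.getLast?_append_cons (u :: m) u t
  simp only [List.cons_append] at hw hlast
  refine ⟨s ++ u :: t, ⟨List.isChain_split.2 ⟨hs, ht⟩, by simpa using hx, ?_⟩, by simp, ?_⟩
  · rwa [List.getLast?_append_cons, hlast, ← List.getLast?_append_cons s] at hy
  · rw [pathWeight_append_cons ℓ s u t, pathWeight_append_cons ℓ s u (m ++ u :: t), hw]
    linarith

lemma IsPathFrom.dist_le_pathWeight {p : List V} {x y : V} (hp : IsPathFrom E p x y) :
    dist E ℓ x y ≤ pathWeight ℓ p :=
  sInf_le ⟨p, hp, rfl⟩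

lemma IsWalkFrom.dist_le_pathWeight (hG : NoNonposCycle E ℓ) {c : List V} {x y : V}
    (hc : IsWalkFrom E c x y) : dist E ℓ x y ≤ pathWeight ℓ c := by
  induction hn : c.length using Nat.strong_induction_on generalizing c with
  | _ n ih =>
    by_cases hnd : c.Nodup
    · exact (isPathFrom_iff.2 ⟨hnd, hc⟩).dist_le_pathWeight
    · obtain ⟨c', hc', hlen, hw⟩ := hc.exists_shorter hG hnd
      exact (ih _ (hn ▸ hlen) hc' rfl).trans (EReal.coe_le_coe_iff.2 hw.le)

lemma IsWalkFrom.dist_lt_pathWeight (hG : NoNonposCycle E ℓ) {c : List V} {x y : V}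
    (hc : IsWalkFrom E c x y) (hnd : ¬ c.Nodup) : dist E ℓ x y < pathWeight ℓ c := by
  obtain ⟨c', hc', -, hw⟩ := hc.exists_shorter hG hnd
  exact (hc'.dist_le_pathWeight hG).trans_lt (EReal.coe_lt_coe_iff.2 hw)

lemma isShortestPath_append_cons_iff (hG : NoNonposCycle E ℓ) {s t : List V} {x y v : V}
    (hd : dist E ℓ x y = dist E ℓ x v + dist E ℓ v y) :
    IsShortestPath E ℓ (s ++ v :: t) x y ↔
      IsShortestPath E ℓ (s ++ [v]) x v ∧ IsShortestPath E ℓ (v :: t) v y := by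
  have hweight : (pathWeight ℓ (s ++ v :: t) : EReal) =
      pathWeight ℓ (s ++ [v]) + pathWeight ℓ (v :: t) := by
    rw [pathWeight_append_cons ℓ s v t, EReal.coe_add]
  constructor
  · rintro ⟨hp, hw⟩
    obtain ⟨hnd, hch, hx, hy⟩ := isPathFrom_iff.1 hp
    obtain ⟨hs, ht⟩ := List.isChain_split.1 hch
    have hsv : IsPathFrom E (s ++ [v]) x v := isPathFrom_iff.2
      ⟨hnd.sublist (by simp), hs, by simpa using hx, by simp⟩
    have hvt : IsPathFrom E (v :: t) v y := isPathFrom_iff.2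
      ⟨hnd.sublist (by simp), ht, rfl, by rwa [List.getLast?_append_cons] at hy⟩
    rw [hweight, hd] at hw
    obtain ⟨h1, h2⟩ := EReal.eq_coe_of_le_of_add_eq hsv.dist_le_pathWeight
      hvt.dist_le_pathWeight hw.symm
    exact ⟨⟨hsv, h1.symm⟩, ⟨hvt, h2.symm⟩⟩
  · rintro ⟨⟨hsv, hws⟩, ⟨hvt, hwt⟩⟩
    obtain ⟨-, hs, hx, -⟩ := isPathFrom_iff.1 hsv
    obtain ⟨-, ht, -, hy⟩ := isPathFrom_iff.1 hvt
    have hw : (pathWeight ℓ (s ++ v :: t) : EReal) = dist E ℓ x y := by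
      rw [hweight, hws, hwt, hd]
    have hwalk : IsWalkFrom E (s ++ v :: t) x y :=
      ⟨List.isChain_split.2 ⟨hs, ht⟩, by simpa using hx, by rwa [List.getLast?_append_cons]⟩
    have hnd : (s ++ v :: t).Nodup := by
      by_contra hnd
      exact (hwalk.dist_lt_pathWeight hG hnd).ne hw.symm
    exact ⟨isPathFrom_iff.2 ⟨hnd, hwalk⟩, hw⟩

lemma finite_setOf_isShortestPath [Fintype V] (E : V → V → Prop) (ℓ : V → V → ℝ) (x y : V) :
    {p | IsShortestPath E ℓ p x y}.Finite :=
  (List.finite_length_le V (Fintype.card V)).subset fun _ hp => hp.1.1.2.1.length_le_card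

lemma finite_disjPairs [Fintype V] (E : V → V → Prop) (ℓ : V → V → ℝ) (x1 y1 x2 y2 : V) :
    (disjPairs E ℓ x1 y1 x2 y2).Finite :=
  ((finite_setOf_isShortestPath E ℓ x1 y1).prod (finite_setOf_isShortestPath E ℓ x2 y2)).subset
    fun _ hq => ⟨hq.1, hq.2.1⟩

lemma pathConcat_append_singleton_cons (s : List V) (u : V) (t : List V) :
    pathConcat (s ++ [u]) (u :: t) = s ++ u :: t := by
  simp [pathConcat]

lemma pathMon_pathConcat (F : Type*) [Field F] {A D : List V} {v : V}
    (hA : A.getLast? = some v) (hD : D.head? = some v) :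
    pathMon F (pathConcat A D) = pathMon F A * pathMon F D := by
  obtain ⟨s, rfl⟩ := List.getLast?_eq_some_iff.1 hA
  obtain ⟨t, rfl⟩ := List.head?_eq_some_iff.1 hD
  rw [pathConcat_append_singleton_cons, pathMon_append_cons]

lemma isShortestPath_pathConcat (hG : NoNonposCycle E ℓ) {A D : List V} {x y v : V}
    (hd : dist E ℓ x y = dist E ℓ x v + dist E ℓ v y)
    (hA : IsShortestPath E ℓ A x v) (hD : IsShortestPath E ℓ D v y) :
    IsShortestPath E ℓ (pathConcat A D) x y := by
  obtain ⟨s, rfl⟩ := List.getLast?_eq_some_iff.1 hA.1.2.2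
  obtain ⟨t, rfl⟩ := List.head?_eq_some_iff.1 hD.1.2.1
  rw [pathConcat_append_singleton_cons]
  exact (isShortestPath_append_cons_iff hG hd).2 ⟨hA, hD⟩

variable [DecidableEq V]

lemma idxOf_eq_zero_of_head? {l : List V} {x : V} (h : l.head? = some x) : l.idxOf x = 0 := by
  obtain ⟨l, rfl⟩ := List.head?_eq_some_iff.1 h
  exact List.idxOf_cons_self

lemma idxOf_add_one_eq_length_of_getLast? {l : List V} {y : V} (hnd : l.Nodup)
    (h : l.getLast? = some y) :
    l.idxOf y + 1 = l.length := by
  obtain ⟨l, rfl⟩ := List.getLast?_eq_some_iff.1 h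
  have hy : y ∉ l := fun h =>
    (List.nodup_append.1 hnd).2.2 y h y (List.mem_singleton_self y) rfl
  simp [List.idxOf_append_of_notMem hy]

lemma subpath_append_cons {s t : List V} {x y v : V} (hnd : (s ++ v :: t).Nodup)
    (hx : (s ++ v :: t).head? = some x) (hy : (s ++ v :: t).getLast? = some y) :
    subpath (s ++ v :: t) x v = s ++ [v] ∧ subpath (s ++ v :: t) v y = v :: t := by
  have hvs : v ∉ s := fun h =>
    (List.nodup_cons.1 (List.nodup_middle.1 hnd)).1 (List.mem_append_left t h)
  have hv : (s ++ v :: t).idxOf v = s.length := by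
    simp [List.idxOf_append_of_notMem hvs]
  rw [subpath, subpath, idxOf_eq_zero_of_head? hx, idxOf_add_one_eq_length_of_getLast? hnd hy, hv,
    List.take_length]
  constructor
  · simp [List.take_append]
  · simp

lemma subpath_pathConcat {A D : List V} {x y v : V}
    (hA : IsPathFrom E A x v) (hD : IsPathFrom E D v y) (hnd : (pathConcat A D).Nodup) :
    subpath (pathConcat A D) x v = A ∧ subpath (pathConcat A D) v y = D := by
  obtain ⟨s, rfl⟩ := List.getLast?_eq_some_iff.1 hA.2.2
  obtain ⟨t, rfl⟩ := List.head?_eq_some_iff.1 hD.2.1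
  rw [pathConcat_append_singleton_cons] at hnd ⊢
  exact subpath_append_cons hnd (by simpa using hA.2.1)
    (by rw [List.getLast?_append_cons]; exact hD.2.2)

lemma pathConcat_subpath {p : List V} {x y v : V} (hp : IsPathFrom E p x y) (hv : v ∈ p) :
    pathConcat (subpath p x v) (subpath p v y) = p := by
  obtain ⟨s, t, rfl⟩ := List.append_of_mem hv
  obtain ⟨h1, h2⟩ := subpath_append_cons hp.1.2.1 hp.2.1 hp.2.2
  rw [h1, h2, pathConcat_append_singleton_cons]

lemma isShortestPath_subpath (hG : NoNonposCycle E ℓ) {p : List V} {x y v : V}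
    (hd : dist E ℓ x y = dist E ℓ x v + dist E ℓ v y)
    (hp : IsShortestPath E ℓ p x y) (hv : v ∈ p) :
    IsShortestPath E ℓ (subpath p x v) x v ∧ IsShortestPath E ℓ (subpath p v y) v y := by
  obtain ⟨s, t, rfl⟩ := List.append_of_mem hv
  obtain ⟨h1, h2⟩ := subpath_append_cons hp.1.1.2.1 hp.1.2.1 hp.1.2.2
  rw [h1, h2]
  exact (isShortestPath_append_cons_iff hG hd).1 hp

lemma bijOn_pathConcat (hG : NoNonposCycle E ℓ) {x1 y1 x2 y2 v : V}
    (hd1 : dist E ℓ x1 y1 = dist E ℓ x1 v + dist E ℓ v y1)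
    (hd2 : dist E ℓ x2 y2 = dist E ℓ x2 v + dist E ℓ v y2) :
    Set.BijOn (fun q : (List V × (List V × List V)) × List V =>
        (pathConcat q.1.2.1 q.2, pathConcat q.1.1 q.1.2.2))
      (({p | IsShortestPath E ℓ p x2 v} ×ˢ disjPairs E ℓ x1 v v y2) ×ˢ
        {p | IsShortestPath E ℓ p v y1})
      (HvPairs E ℓ v x1 y1 x2 y2) := by
  refine Set.InvOn.bijOn (f' := fun q =>
      ((subpath q.2 x2 v, (subpath q.1 x1 v, subpath q.2 v y2)), subpath q.1 v y1))
    ⟨?_, ?_⟩ ?_ ?_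
  · rintro ⟨⟨C, A, B⟩, D⟩ ⟨⟨hC, hA, hB, -⟩, hD⟩
    obtain ⟨hCx, hBy⟩ := subpath_pathConcat hC.1 hB.1
      (isShortestPath_pathConcat hG hd2 hC hB).1.1.2.1
    obtain ⟨hAx, hDy⟩ := subpath_pathConcat hA.1 hD.1
      (isShortestPath_pathConcat hG hd1 hA hD).1.1.2.1
    simp only [hCx, hBy, hAx, hDy]
  · rintro ⟨p1, p2⟩ ⟨hp1, hp2, hv1, hv2, -⟩
    simp only [pathConcat_subpath hp1.1 hv1, pathConcat_subpath hp2.1 hv2]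
  · rintro ⟨⟨C, A, B⟩, D⟩ ⟨⟨hC, hA, hB, hAB⟩, hD⟩
    have h1 := isShortestPath_pathConcat hG hd1 hA hD
    have h2 := isShortestPath_pathConcat hG hd2 hC hB
    refine ⟨h1, h2, List.mem_append_left _ (List.mem_of_getLast? hA.1.2.2),
      List.mem_append_left _ (List.mem_of_getLast? hC.1.2.2), ?_⟩
    rw [(subpath_pathConcat hA.1 hD.1 h1.1.1.2.1).1,
      (subpath_pathConcat hC.1 hB.1 h2.1.1.2.1).2]
    exact hAB
  · rintro ⟨p1, p2⟩ ⟨hp1, hp2, hv1, hv2, hdisj⟩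
    obtain ⟨hx1, hy1⟩ := isShortestPath_subpath hG hd1 hp1 hv1
    obtain ⟨hx2, hy2⟩ := isShortestPath_subpath hG hd2 hp2 hv2
    exact ⟨⟨hx2, hx1, hy2, hdisj⟩, hy1⟩

end DSP

namespace DSP

variable {V : Type*} [Fintype V] [DecidableEq V]

variable (E : V → V → Prop) (ℓ : V → V → ℝ)

theorem Hv_eq_F_mul_Fdisj_mul_F
    (F : Type*) [Field F]
    (hG : NoNonposCycle E ℓ) (x1 y1 x2 y2 v : V)
    (hd1 : dist E ℓ x1 y1 = dist E ℓ x1 v + dist E ℓ v y1)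
    (hd2 : dist E ℓ x2 y2 = dist E ℓ x2 v + dist E ℓ v y2) :
    enumPoly2 F (HvPairs E ℓ v x1 y1 x2 y2) =
      Fpoly F E ℓ x2 v * enumPoly2 F (disjPairs E ℓ x1 v v y2) *
        Fpoly F E ℓ v y1 := by
  have hfinC := finite_setOf_isShortestPath E ℓ x2 v
  have hfinAB := finite_disjPairs E ℓ x1 v v y2
  rw [Fpoly, Fpoly, enumPoly, enumPoly, enumPoly2, enumPoly2, ← finsum_mem_prod_mul hfinC hfinAB,
    ← finsum_mem_prod_mul (hfinC.prod hfinAB) (finite_setOf_isShortestPath E ℓ v y1)]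
  refine (finsum_mem_eq_of_bijOn _ (bijOn_pathConcat hG hd1 hd2) ?_).symm
  rintro ⟨⟨C, A, B⟩, D⟩ ⟨⟨hC, hA, hB, -⟩, hD⟩
  rw [pathMon_pathConcat F hA.1.2.2 hD.1.2.1, pathMon_pathConcat F hC.1.2.2 hB.1.2.1]
  ring

end DSP
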